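/- arXiv:1308.4087 — 3 statements merged into one kernel-verified Lean document; each statement's English description precedes it below -/
import Mathlib

section
/- For every integer n ≥ 2, the maximum cardinality of an independent subset of A^+(B_n) consisting entirely of singleton support maps (i.e., of an independent subset of A^+(B_n)_1) is n²·(⌊n²/4⌋ + n). -/
/-- The Brandt semigroup `B_n`, modeled as `Option (Fin n × Fin n)` where
`none` plays the role of the (two-sided) zero element `ϑ`. -/
def Brandt (n : ℕ) : Type := Option (Fin n × Fin n)

instance (n : ℕ) : DecidableEq (Brandt n) :=
  inferInstanceAs (DecidableEq (Option (Fin n × Fin n)))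

instance (n : ℕ) : Fintype (Brandt n) :=
  inferInstanceAs (Fintype (Option (Fin n × Fin n)))

namespace Brandt

/-- The zero element `ϑ` of `B_n`. -/
def theta (n : ℕ) : Brandt n := none

/-- The element `(i, j)` of `B_n`. -/
def pair {n : ℕ} (i j : Fin n) : Brandt n := some (i, j)

/-- The addition of the Brandt semigroup:
`(i,j) + (k,l) = (i,l)` if `j = k` and `ϑ` otherwise; `ϑ` is absorbing. -/
def add {n : ℕ} : Option (Fin n × Fin n) → Option (Fin n × Fin n) → Option (Fin n × Fin n)
  | some (i, j), some (k, l) => if j = k then some (i, l) else none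
  | _, _ => none

instance (n : ℕ) : Add (Brandt n) := ⟨fun a b => Brandt.add a b⟩

end Brandt

/-- `M(B_n)`: all self-maps of `B_n`, with pointwise addition. -/
abbrev MB (n : ℕ) := Brandt n → Brandt n

/-- `g` is an endomorphism of `(B_n, +)`. -/
def IsEndo {n : ℕ} (g : MB n) : Prop := ∀ a b : Brandt n, g (a + b) = g a + g b

/-- `g` is an automorphism of `(B_n, +)`. -/
def IsAuto {n : ℕ} (g : MB n) : Prop := IsEndo g ∧ Function.Bijective g

/-- The constant map `ξ_c` on `B_n` with value `c`. -/
def xi {n : ℕ} (c : Brandt n) : MB n := fun _ => c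

/-- `C_{B_n}`, the set of all constant maps on `B_n`. -/
def ConstMaps (n : ℕ) : Set (MB n) := {f | ∃ c : Brandt n, f = xi c}

/-- `f` is an affine map: a sum of an endomorphism and a constant map. -/
def IsAffine {n : ℕ} (f : MB n) : Prop := ∃ g c, IsEndo g ∧ f = g + xi c

/-- `A^+(B_n)`: the subsemigroup of `(M(B_n), +)` generated by the affine maps. -/
def Aplus (n : ℕ) : AddSubsemigroup (MB n) := AddSubsemigroup.closure {f | IsAffine f}

/-- `A^+(B_n)` as a set of maps. -/
def AplusSet (n : ℕ) : Set (MB n) := (Aplus n : Set (MB n))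

/-- The support of `f`: the set of elements not mapped to `ϑ`. -/
def supp {n : ℕ} (f : MB n) : Set (Brandt n) := {a | f a ≠ Brandt.theta n}

/-- `X_k`: the set of `k`-support elements of `X`. -/
def supportPart {n : ℕ} (X : Set (MB n)) (k : ℕ) : Set (MB n) :=
  {f ∈ X | (supp f).ncard = k}

/-- A subset `U` of an additive semigroup is independent if no element of `U`
lies in the subsemigroup generated by the remaining elements of `U`. -/
def IndepSet {β : Type*} [Add β] (U : Set β) : Prop :=
  ∀ a ∈ U, a ∉ AddSubsemigroup.closure (U \ {a})

/-- The `n`-support map `(p, q; σ)`, sending `(i, p)` to `(iσ, q)` and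
everything else to `ϑ`. -/
def nMap {n : ℕ} (p q : Fin n) (σ : Equiv.Perm (Fin n)) : MB n := fun a =>
  Option.elim (α := Fin n × Fin n) a (Brandt.theta n)
    (fun x => if x.2 = p then Brandt.pair (σ x.1) q else Brandt.theta n)

/-- The singleton support map `⟨(k, l), α⟩`, sending `(k, l)` to `α` and
everything else to `ϑ`. -/
def sMap {n : ℕ} (k l : Fin n) (α : Brandt n) : MB n :=
  fun a => if a = Brandt.pair k l then α else Brandt.theta n

/-- The set `S = {ξ_(i, i+1) : i ∈ [n-1]} ∪ {ξ_(n, 1)}`, i.e. the constant maps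
`ξ_(i, i+1)` where the successor is taken cyclically in `[n]`. -/
def setS (n : ℕ) : Set (MB n) := {f | ∃ i : Fin n, f = xi (Brandt.pair i (finRotate n i))}

/-- The set `T = {g + h : g ∈ Aut(B_n), h ∈ S}`. -/
def setT (n : ℕ) : Set (MB n) := {f | ∃ g h, IsAuto g ∧ h ∈ setS n ∧ f = g + h}

namespace Stmt14Aux

open Relation Finset

variable {α : Type*} [DecidableEq α]

/-- Edge relation of a finite digraph. -/
def Rel (U : Finset (α × α)) : α → α → Prop := fun x y => (x, y) ∈ U

/-- Combinatorial independence: no edge is generated by a walk avoiding it. -/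
def CIndep (U : Finset (α × α)) : Prop :=
  ∀ e ∈ U, ¬ Relation.TransGen (Rel (U.erase e)) e.1 e.2

lemma pne1 {a b c d : α} (h : a ≠ c) : (a, b) ≠ (c, d) := fun he => h (congrArg Prod.fst he)

lemma pne2 {a b c d : α} (h : b ≠ d) : (a, b) ≠ (c, d) := fun he => h (congrArg Prod.snd he)

omit [DecidableEq α] in
lemma rel_mono {U W : Finset (α × α)} (h : U ⊆ W) : ∀ x y, Rel U x y → Rel W x y :=
  fun _ _ hxy => h hxy

lemma cindep_subset {U W : Finset (α × α)} (h : W ⊆ U) (hU : CIndep U) : CIndep W := by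
  intro e he htg
  exact hU e (h he) (Relation.TransGen.mono (rel_mono (Finset.erase_subset_erase _ h)) _ _ htg)

/-- arithmetic helper -/
lemma ar1 {v : ℕ} (hv : 2 ≤ v) : v ^ 2 / 4 = (v - 2) ^ 2 / 4 + (v - 1) := by
  obtain ⟨w, rfl⟩ : ∃ w, v = w + 2 := ⟨v - 2, by omega⟩
  have h1 : (w + 2) ^ 2 = w ^ 2 + 4 * (w + 1) := by ring
  rw [h1, Nat.add_mul_div_left _ _ (by norm_num : 0 < 4), Nat.add_sub_cancel]
  have h2 : w + 2 - 1 = w + 1 := by omega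
  rw [h2]

lemma ar2 {v' v : ℕ} (h : v' < v) (hv : 2 ≤ v) : v' ^ 2 / 4 + 1 ≤ v ^ 2 / 4 := by
  rcases Nat.lt_or_ge v 3 with h3 | h3
  · interval_cases v
    interval_cases v' <;> norm_num
  · have h4 : v' ^ 2 + 4 ≤ v ^ 2 := by nlinarith
    calc v' ^ 2 / 4 + 1 = (v' ^ 2 + 4) / 4 := by omega
      _ ≤ v ^ 2 / 4 := Nat.div_le_div_right h4

/-- The Mantel-type bound for the acyclic part. -/
lemma acyc_bound : ∀ (k : ℕ) (V : Finset α) (U : Finset (α × α)), V.card ≤ k →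
    U ⊆ V ×ˢ V → (∀ a, ¬ Relation.TransGen (Rel U) a a) → CIndep U →
    U.card ≤ V.card ^ 2 / 4 := by
  intro k
  induction k with
  | zero =>
    intro V U hV hUV _ _
    have hVe : V = ∅ := Finset.card_eq_zero.1 (Nat.le_zero.1 hV)
    have : U = ∅ := by subst hVe; simpa using hUV
    simp [this]
  | succ k ih =>
    intro V U hV hUV hacyc hind
    rcases U.eq_empty_or_nonempty with rfl | ⟨e, he⟩
    · simp
    obtain ⟨a, b⟩ := e
    have hab : a ≠ b := by
      rintro rfl
      exact hacyc a (TransGen.single he)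
    have haV : a ∈ V := (Finset.mem_product.1 (hUV he)).1
    have hbV : b ∈ V := (Finset.mem_product.1 (hUV he)).2
    have hV2 : 2 ≤ V.card := by
      have h2 := Finset.card_le_card (show {a, b} ⊆ V by
        intro z hz; simp at hz; rcases hz with rfl | rfl <;> assumption)
      rwa [Finset.card_insert_of_notMem (by simpa using hab), Finset.card_singleton] at h2
    -- basic exclusions
    have loopfree : ∀ v, (v, v) ∉ U := fun v hv => hacyc v (TransGen.single hv)
    have no_ba : (b, a) ∉ U := fun hba =>
      hacyc a ((TransGen.single (show Rel U a b from he)).tail hba)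
    -- six exclusions for x outside {a, b}
    have f1 : ∀ x, (a, x) ∈ U → (x, a) ∈ U → False := fun x h1 h2 =>
      hacyc a ((TransGen.single (show Rel U a x from h1)).tail h2)
    have f2 : ∀ x, (b, x) ∈ U → (x, b) ∈ U → False := fun x h1 h2 =>
      hacyc b ((TransGen.single (show Rel U b x from h1)).tail h2)
    have f3 : ∀ x, (x, a) ∈ U → (b, x) ∈ U → False := fun x h1 h2 =>
      hacyc x (((TransGen.single (show Rel U x a from h1)).tail he).tail h2)
    have f4 : ∀ x, x ≠ a → x ≠ b → (a, x) ∈ U → (x, b) ∈ U → False := by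
      intro x hxa hxb h1 h2
      have s1 : Rel (U.erase (a, b)) a x := Finset.mem_erase.2 ⟨pne2 hxb, h1⟩
      have s2 : Rel (U.erase (a, b)) x b := Finset.mem_erase.2 ⟨pne1 hxa, h2⟩
      exact hind (a, b) he ((TransGen.single s1).tail s2)
    have f5 : ∀ x, x ≠ a → x ≠ b → (a, x) ∈ U → (b, x) ∈ U → False := by
      intro x hxa hxb h1 h2
      have s1 : Rel (U.erase (a, x)) a b := Finset.mem_erase.2 ⟨pne2 (Ne.symm hxb), he⟩
      have s2 : Rel (U.erase (a, x)) b x := Finset.mem_erase.2 ⟨pne1 (Ne.symm hab), h2⟩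
      exact hind (a, x) h1 ((TransGen.single s1).tail s2)
    have f6 : ∀ x, x ≠ a → x ≠ b → (x, a) ∈ U → (x, b) ∈ U → False := by
      intro x hxa hxb h1 h2
      have s1 : Rel (U.erase (x, b)) x a := Finset.mem_erase.2 ⟨pne2 hab, h1⟩
      have s2 : Rel (U.erase (x, b)) a b := Finset.mem_erase.2 ⟨pne1 (Ne.symm hxa), he⟩
      exact hind (x, b) h2 ((TransGen.single s1).tail s2)
    -- split U
    set V' := (V.erase a).erase b with hV'
    set U' := U.filter (fun x => x.1 ≠ a ∧ x.1 ≠ b ∧ x.2 ≠ a ∧ x.2 ≠ b) with hU'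
    set T := U.filter (fun x => ¬(x.1 ≠ a ∧ x.1 ≠ b ∧ x.2 ≠ a ∧ x.2 ≠ b)) with hT
    have hsplit : U'.card + T.card = U.card := Finset.card_filter_add_card_filter_not _
    have hV'card : V'.card = V.card - 2 := by
      rw [hV', Finset.card_erase_of_mem (Finset.mem_erase.2 ⟨Ne.symm hab, hbV⟩),
        Finset.card_erase_of_mem haV]
      omega
    have hU'sub : U' ⊆ V' ×ˢ V' := by
      intro x hx
      rw [hU', Finset.mem_filter] at hx
      obtain ⟨hxU, h1, h2, h3, h4⟩ := hx
      have hp := Finset.mem_product.1 (hUV hxU)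
      exact Finset.mem_product.2 ⟨Finset.mem_erase.2 ⟨h2, Finset.mem_erase.2 ⟨h1, hp.1⟩⟩,
        Finset.mem_erase.2 ⟨h4, Finset.mem_erase.2 ⟨h3, hp.2⟩⟩⟩
    have hU'acyc : ∀ v, ¬ Relation.TransGen (Rel U') v v := fun v hv =>
      hacyc v (Relation.TransGen.mono (rel_mono (Finset.filter_subset _ _)) _ _ hv)
    have hU'card : U'.card ≤ V'.card ^ 2 / 4 := by
      refine ih V' U' ?_ hU'sub hU'acyc (cindep_subset (Finset.filter_subset _ _) hind)
      omega
    -- characterization of touching edges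
    set φ : α × α → α :=
      fun x => if x = (a, b) then a else if x.1 = a ∨ x.1 = b then x.2 else x.1 with hφ
    have char : ∀ z : α × α, z ∈ U →
        ¬(z.1 ≠ a ∧ z.1 ≠ b ∧ z.2 ≠ a ∧ z.2 ≠ b) → z ≠ (a, b) →
        ∃ w, w ≠ a ∧ w ≠ b ∧ w ∈ V ∧ φ z = w ∧
          (z = (a, w) ∨ z = (b, w) ∨ z = (w, a) ∨ z = (w, b)) := by
      rintro ⟨z1, z2⟩ hzU hzT hzne
      have hp := Finset.mem_product.1 (hUV hzU)
      have key : ¬((z1 = a ∨ z1 = b) ∧ (z2 = a ∨ z2 = b)) := by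
        rintro ⟨h1 | h1, h2 | h2⟩ <;> rw [h1, h2] at hzU hzne
        · exact loopfree a hzU
        · exact hzne rfl
        · exact no_ba hzU
        · exact loopfree b hzU
      by_cases h1 : z1 = a ∨ z1 = b
      · have h2 : ¬(z2 = a ∨ z2 = b) := fun h => key ⟨h1, h⟩
        push_neg at h2
        refine ⟨z2, h2.1, h2.2, hp.2, ?_, ?_⟩
        · rw [hφ]; simp only [if_neg hzne, if_pos h1]
        · rcases h1 with h1 | h1
          · left; rw [h1]
          · right; left; rw [h1]
      · push_neg at h1
        have h2 : z2 = a ∨ z2 = b := by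
          by_contra hc
          push_neg at hc
          exact hzT ⟨h1.1, h1.2, hc.1, hc.2⟩
        refine ⟨z1, h1.1, h1.2, hp.1, ?_, ?_⟩
        · rw [hφ]; simp only [if_neg hzne, if_neg (by tauto : ¬(z1 = a ∨ z1 = b))]
        · rcases h2 with h2 | h2
          · right; right; left; rw [h2]
          · right; right; right; rw [h2]
    -- bound T via injection
    have hTcard : T.card ≤ V.card - 1 := by
      have hanV' : a ∉ V' := by simp [hV']
      have hcard2 : (insert a V').card = V.card - 1 := by
        rw [Finset.card_insert_of_notMem hanV', hV'card]
        omega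
      rw [← hcard2]
      apply Finset.card_le_card_of_injOn φ
      · intro x hx
        simp only [Finset.mem_coe, hT, Finset.mem_filter] at hx
        obtain ⟨hxU, hxT⟩ := hx
        by_cases hex : x = (a, b)
        · have : φ x = a := by rw [hφ]; simp [hex]
          rw [this]; exact Finset.mem_insert_self _ _
        · obtain ⟨w, hwa, hwb, hwV, hw1, _⟩ := char x hxU hxT hex
          rw [hw1]
          exact Finset.mem_insert_of_mem
            (Finset.mem_erase.2 ⟨hwb, Finset.mem_erase.2 ⟨hwa, hwV⟩⟩)
      · intro x hx y hy hxy
        simp only [Finset.coe_filter, Set.mem_setOf_eq, Finset.mem_coe] at hx hy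
        rw [hT, Finset.mem_filter] at hx hy
        obtain ⟨hxU, hxT⟩ := hx
        obtain ⟨hyU, hyT⟩ := hy
        by_contra hne
        by_cases hxe : x = (a, b) <;> by_cases hye : y = (a, b)
        · exact hne (hxe.trans hye.symm)
        · obtain ⟨w, hwa, hwb, _, hw1, _⟩ := char y hyU hyT hye
          have hx' : φ x = a := by rw [hφ]; simp [hxe]
          rw [hx', hw1] at hxy
          exact hwa hxy.symm
        · obtain ⟨w, hwa, hwb, _, hw1, _⟩ := char x hxU hxT hxe
          have hy' : φ y = a := by rw [hφ]; simp [hye]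
          rw [hy', hw1] at hxy
          exact hwa hxy
        · obtain ⟨w, hwa, hwb, _, hw1, hwc⟩ := char x hxU hxT hxe
          obtain ⟨w', hwa', hwb', _, hw1', hwc'⟩ := char y hyU hyT hye
          rw [hw1, hw1'] at hxy
          subst hxy
          rcases hwc with rfl | rfl | rfl | rfl <;> rcases hwc' with h | h | h | h <;>
            rw [h] at hyU hne <;>
            first
            | exact hne rfl
            | exact f1 w hxU hyU
            | exact f1 w hyU hxU
            | exact f2 w hxU hyU
            | exact f2 w hyU hxU
            | exact f3 w hxU hyU
            | exact f3 w hyU hxU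
            | exact f4 w hwa hwb hxU hyU
            | exact f4 w hwa hwb hyU hxU
            | exact f5 w hwa hwb hxU hyU
            | exact f5 w hwa hwb hyU hxU
            | exact f6 w hwa hwb hxU hyU
            | exact f6 w hwa hwb hyU hxU
    calc U.card = U'.card + T.card := hsplit.symm
      _ ≤ V'.card ^ 2 / 4 + (V.card - 1) := Nat.add_le_add hU'card hTcard
      _ = V.card ^ 2 / 4 := by rw [hV'card, (ar1 hV2)]

end Stmt14Aux

namespace Stmt14Aux
open Relation Finset

section Walks

variable {α : Type*} {r : α → α → Prop}

lemma path_of_transGen {a b : α} (h : Relation.TransGen r a b) :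
    ∃ m, 1 ≤ m ∧ ∃ f : ℕ → α, f 0 = a ∧ f m = b ∧ ∀ t, t < m → r (f t) (f (t + 1)) := by
  induction h with
  | @single c hac =>
    refine ⟨1, le_refl 1, fun t => if t = 0 then a else c, by simp, by simp, ?_⟩
    intro t ht
    interval_cases t
    simpa using hac
  | @tail b' c hab' hb'c ih =>
    obtain ⟨m, hm, f, h0, hL, hs⟩ := ih
    refine ⟨m + 1, by omega, fun t => if t < m + 1 then f t else c, by simp [h0], by simp, ?_⟩
    intro t ht
    rcases Nat.lt_or_ge t m with h | h
    · have h1 : t < m + 1 := by omega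
      have h2 : t + 1 < m + 1 := by omega
      simpa [h1, h2] using hs t h
    · have ht' : t = m := by omega
      subst ht'
      simpa [Nat.lt_succ_self, hL] using hb'c

lemma mod_succ_eq (m t : ℕ) : (t + 1) % m = (t % m + 1) % m := by
  have hdm := Nat.div_add_mod t m
  have e1 : t + 1 = (t % m + 1) + m * (t / m) := by omega
  rw [e1, Nat.add_mul_mod_self_left]

lemma per_mod {f : ℕ → α} {m : ℕ} (hm : 1 ≤ m) (hper : ∀ t, f (t + m) = f t) :
    ∀ t, f t = f (t % m) := by
  intro t
  induction t using Nat.strong_induction_on with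
  | _ t ih =>
    by_cases h : t < m
    · rw [Nat.mod_eq_of_lt h]
    · push_neg at h
      have h1 : t - m + m = t := by omega
      have h2 : f t = f (t - m) := by rw [← hper (t - m), h1]
      calc f t = f (t - m) := h2
        _ = f ((t - m) % m) := ih (t - m) (by omega)
        _ = f (t % m) := by rw [← Nat.mod_eq_sub_mod h]

lemma step_shift {f : ℕ → α} {m : ℕ} (hm : 1 ≤ m) (hper : ∀ t, f (t + m) = f t) (t : ℕ) :
    (f t, f (t + 1)) = (f (t % m), f (t % m + 1)) := by
  have h1 : f t = f (t % m) := per_mod hm hper t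
  have h2 : f (t + 1) = f (t % m + 1) := by
    rw [per_mod hm hper (t + 1), per_mod hm hper (t % m + 1), mod_succ_eq]
  rw [h1, h2]

lemma mk_per {m : ℕ} (hm : 1 ≤ m) (f : ℕ → α) (hcross : f m = f 0)
    (hstep : ∀ t, t < m → r (f t) (f (t + 1))) :
    ∃ F : ℕ → α, (∀ t, F (t + m) = F t) ∧ (∀ t, r (F t) (F (t + 1))) := by
  refine ⟨fun t => f (t % m), fun t => by simp only [Nat.add_mod_right], ?_⟩
  intro t
  have h2 : t % m < m := Nat.mod_lt _ hm
  have hx := hstep (t % m) h2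
  show r (f (t % m)) (f ((t + 1) % m))
  rw [mod_succ_eq]
  by_cases hc : t % m + 1 = m
  · rw [hc, Nat.mod_self]
    rw [hc, hcross] at hx
    exact hx
  · rw [Nat.mod_eq_of_lt (lt_of_le_of_ne h2 hc)]
    exact hx

lemma exists_min_cycle (hne : ∃ a, Relation.TransGen r a a) (hirr : ∀ a, ¬ r a a) :
    ∃ (m : ℕ) (f : ℕ → α), 2 ≤ m ∧ (∀ t, f (t + m) = f t) ∧ (∀ t : ℕ, r (f t) (f (t + 1))) ∧
      (∀ i, i < m → ∀ j, j < m → f i = f j → i = j) := by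
  classical
  obtain ⟨a, ha⟩ := hne
  obtain ⟨m0, hm0, f0, h00, h0L, h0s⟩ := path_of_transGen ha
  have hex : ∃ m, 1 ≤ m ∧ ∃ F : ℕ → α, (∀ t, F (t + m) = F t) ∧ ∀ t, r (F t) (F (t + 1)) := by
    obtain ⟨F, hp, hs⟩ := mk_per hm0 f0 (h0L.trans h00.symm) h0s
    exact ⟨m0, hm0, F, hp, hs⟩
  obtain ⟨hM1, F, hFp, hFs⟩ := Nat.find_spec hex
  set M := Nat.find hex with hMdef
  have hmin : ∀ d, d < M → ¬(1 ≤ d ∧ ∃ G : ℕ → α, (∀ t, G (t + d) = G t) ∧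
      ∀ t, r (G t) (G (t + 1))) := fun d hd => Nat.find_min hex hd
  have key : ∀ i j, i < j → j < M → F i ≠ F j := by
    intro i j hij hjM heq
    set d := j - i with hd
    have hd1 : 1 ≤ d := by omega
    have hcross : F (i + d) = F (i + 0) := by
      have he : i + d = j := by omega
      rw [he]
      simpa using heq.symm
    obtain ⟨G, hGp, hGs⟩ := mk_per (r := r) hd1 (fun t => F (i + t))
      (by simpa using hcross) (fun t _ => by
        show r (F (i + t)) (F (i + (t + 1)))
        have he : i + (t + 1) = i + t + 1 := by omega
        rw [he]
        exact hFs (i + t))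
    exact hmin d (by omega) ⟨hd1, G, hGp, hGs⟩
  have hM2 : 2 ≤ M := by
    by_contra h
    have hM1' : M = 1 := by omega
    have h0 := hFs 0
    rw [show (0 + 1 : ℕ) = 0 + M by omega, hFp 0] at h0
    exact hirr _ h0
  refine ⟨M, F, hM2, hFp, hFs, ?_⟩
  intro i hi j hj hij
  by_contra hne'
  rcases Nat.lt_or_ge i j with h | h
  · exact key i j h hj hij
  · exact key j i (by omega) hi hij.symm

end Walks

section Contraction

variable {α : Type*} [DecidableEq α]

/-- vertex set of the cycle -/
def CsF (f : ℕ → α) (m : ℕ) : Finset α := (Finset.range m).image f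

/-- edge set of the cycle -/
def CEF (f : ℕ → α) (m : ℕ) : Finset (α × α) :=
  (Finset.range m).image (fun i => (f i, f (i + 1)))

variable {U : Finset (α × α)} {m : ℕ} {f : ℕ → α}

lemma ce_mem (hm : 1 ≤ m) (hper : ∀ t, f (t + m) = f t) (t : ℕ) :
    (f t, f (t + 1)) ∈ CEF f m := by
  rw [step_shift hm hper t]
  exact Finset.mem_image.2 ⟨t % m, Finset.mem_range.2 (Nat.mod_lt _ hm), rfl⟩

lemma cs_mem (hm : 1 ≤ m) (hper : ∀ t, f (t + m) = f t) (t : ℕ) : f t ∈ CsF f m := by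
  rw [per_mod hm hper t]
  exact Finset.mem_image.2 ⟨t % m, Finset.mem_range.2 (Nat.mod_lt _ hm), rfl⟩

lemma ce_sub (hstep : ∀ t, (f t, f (t + 1)) ∈ U) : CEF f m ⊆ U := by
  intro e he
  obtain ⟨i, _, rfl⟩ := Finset.mem_image.1 he
  exact hstep i

lemma ce_endpoints (hm : 1 ≤ m) (hper : ∀ t, f (t + m) = f t) {e : α × α} (he : e ∈ CEF f m) :
    e.1 ∈ CsF f m ∧ e.2 ∈ CsF f m := by
  obtain ⟨i, _, rfl⟩ := Finset.mem_image.1 he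
  exact ⟨cs_mem hm hper i, cs_mem hm hper (i + 1)⟩

lemma steps_in_erase (hm : 1 ≤ m) (hper : ∀ t, f (t + m) = f t)
    (hstep : ∀ t, (f t, f (t + 1)) ∈ U) {e : α × α} (hbad : e ∉ CEF f m) :
    ∀ t, (f t, f (t + 1)) ∈ U.erase e := fun t =>
  Finset.mem_erase.2 ⟨fun h => hbad (h ▸ ce_mem hm hper t), hstep t⟩

lemma walk_forward {W : Finset (α × α)} (hW : ∀ t, (f t, f (t + 1)) ∈ W) (i k : ℕ) :
    Relation.ReflTransGen (Rel W) (f i) (f (i + k)) := by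
  induction k with
  | zero => exact Relation.ReflTransGen.refl
  | succ k ih => exact ih.tail (show Rel W (f (i + k)) (f (i + k + 1)) from hW (i + k))

lemma walk_forwardT {W : Finset (α × α)} (hW : ∀ t, (f t, f (t + 1)) ∈ W) (i k : ℕ)
    (hk : 1 ≤ k) : Relation.TransGen (Rel W) (f i) (f (i + k)) := by
  have h1 : Relation.ReflTransGen (Rel W) (f i) (f (i + (k - 1))) := walk_forward hW i (k - 1)
  have h2 : Rel W (f (i + (k - 1))) (f (i + (k - 1) + 1)) := hW _
  have h3 : i + (k - 1) + 1 = i + k := by omega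
  rw [h3] at h2
  exact Relation.TransGen.trans_right h1 (Relation.TransGen.single h2)

lemma cs_reach {W : Finset (α × α)} (hm : 1 ≤ m) (hper : ∀ t, f (t + m) = f t)
    (hW : ∀ t, (f t, f (t + 1)) ∈ W) {x y : α} (hx : x ∈ CsF f m) (hy : y ∈ CsF f m) :
    Relation.ReflTransGen (Rel W) x y := by
  obtain ⟨i, hi, rfl⟩ := Finset.mem_image.1 hx
  obtain ⟨j, hj, rfl⟩ := Finset.mem_image.1 hy
  rw [Finset.mem_range] at hi hj
  have h1 : Relation.ReflTransGen (Rel W) (f i) (f (i + (j + m - i))) := walk_forward hW _ _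
  have h2 : i + (j + m - i) = j + m := by omega
  rw [h2, hper j] at h1
  exact h1

lemma chords (hm : 2 ≤ m) (hper : ∀ t, f (t + m) = f t)
    (hstep : ∀ t, (f t, f (t + 1)) ∈ U) (hind : CIndep U) :
    ∀ e ∈ U, e.1 ∈ CsF f m → e.2 ∈ CsF f m → e ∈ CEF f m := by
  intro e heU h1 h2
  by_contra hne
  apply hind e heU
  obtain ⟨i, hi, hfi⟩ := Finset.mem_image.1 h1
  obtain ⟨j, hj, hfj⟩ := Finset.mem_image.1 h2
  rw [Finset.mem_range] at hi hj
  have hsteps := steps_in_erase (by omega) hper hstep hne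
  have h3 : Relation.TransGen (Rel (U.erase e)) (f i) (f (i + (j + m - i))) :=
    walk_forwardT hsteps i _ (by omega)
  have h4 : i + (j + m - i) = j + m := by omega
  rw [h4, hper j, hfi, hfj] at h3
  exact h3

end Contraction

end Stmt14Aux


namespace Stmt14Aux
open Relation Finset

variable {α : Type*} [DecidableEq α]

set_option maxHeartbeats 1000000 in
theorem core_bound : ∀ (k : ℕ) (V : Finset α) (U : Finset (α × α)), V.card ≤ k →
    U ⊆ V ×ˢ V → CIndep U → U.card ≤ V.card ^ 2 / 4 + V.card := by
  intro k
  induction k with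
  | zero =>
    intro V U hV hUV _
    have hVe : V = ∅ := Finset.card_eq_zero.1 (Nat.le_zero.1 hV)
    have : U = ∅ := by subst hVe; simpa using hUV
    simp [this]
  | succ k ih =>
    intro V U hV hUV hind
    classical
    set E := U.filter (fun x => x.1 ≠ x.2) with hE
    by_cases hcyc : ∃ v, Relation.TransGen (Rel E) v v
    · -- there is a (non-loop) cycle: contract it
      have hirr : ∀ v, ¬ Rel E v v := by
        intro v hv
        have := (Finset.mem_filter.1 hv).2
        exact this rfl
      obtain ⟨m, f, hm, hper, hstepE, hinj⟩ := exists_min_cycle hcyc hirr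
      have hstep : ∀ t, (f t, f (t + 1)) ∈ U := fun t => (Finset.mem_filter.1 (hstepE t)).1
      have hm1 : (1 : ℕ) ≤ m := by omega
      set c := f 0 with hc
      have hcCs : c ∈ CsF f m := hc ▸ cs_mem hm1 hper 0
      have hCsV : CsF f m ⊆ V := by
        intro x hx
        obtain ⟨i, _, rfl⟩ := Finset.mem_image.1 hx
        exact (Finset.mem_product.1 (hUV (hstep i))).1
      have hCscard : (CsF f m).card = m := by
        rw [CsF, Finset.card_image_of_injOn, Finset.card_range]
        intro i hi j hj hij
        simp only [Finset.coe_range, Set.mem_Iio] at hi hj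
        exact hinj i hi j hj hij
      have hCEsub : CEF f m ⊆ U := ce_sub hstep
      have hCEcard : (CEF f m).card = m := by
        rw [CEF, Finset.card_image_of_injOn, Finset.card_range]
        intro i hi j hj hij
        simp only [Finset.coe_range, Set.mem_Iio] at hi hj
        exact hinj i hi j hj (congrArg Prod.fst hij)
      have hchord := chords hm hper hstep hind
      -- cross-edge uniqueness
      have hC2 : ∀ x u v, x ∉ CsF f m → (x, u) ∈ U → (x, v) ∈ U →
          u ∈ CsF f m → v ∈ CsF f m → u = v := by
        intro x u v hx hu hv hucs hvcs
        by_contra hne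
        apply hind (x, u) hu
        have hnotCE : ((x, v) : α × α) ∉ CEF f m := fun hmem =>
          hx (ce_endpoints hm1 hper hmem).1
        have hnotCE2 : ((x, u) : α × α) ∉ CEF f m := fun hmem =>
          hx (ce_endpoints hm1 hper hmem).1
        have hWsteps := steps_in_erase hm1 hper hstep hnotCE2
        have s1 : Rel (U.erase (x, u)) x v :=
          Finset.mem_erase.2 ⟨pne2 (Ne.symm hne), hv⟩
        have s2 : Relation.ReflTransGen (Rel (U.erase (x, u))) v u :=
          cs_reach hm1 hper hWsteps hvcs hucs
        exact Relation.TransGen.trans_left (Relation.TransGen.single s1) s2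
      have hC3 : ∀ x u v, x ∉ CsF f m → (u, x) ∈ U → (v, x) ∈ U →
          u ∈ CsF f m → v ∈ CsF f m → u = v := by
        intro x u v hx hu hv hucs hvcs
        by_contra hne
        apply hind (v, x) hv
        have hnotCE : ((v, x) : α × α) ∉ CEF f m := fun hmem =>
          hx (ce_endpoints hm1 hper hmem).2
        have hWsteps := steps_in_erase hm1 hper hstep hnotCE
        have s1 : Relation.ReflTransGen (Rel (U.erase (v, x))) v u :=
          cs_reach hm1 hper hWsteps hvcs hucs
        have s2 : Rel (U.erase (v, x)) u x :=
          Finset.mem_erase.2 ⟨pne1 hne, hu⟩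
        exact Relation.TransGen.trans_right s1 (Relation.TransGen.single s2)
      -- contraction map
      set π : α → α := fun x => if x ∈ CsF f m then c else x with hπ
      have pi_spec1 : ∀ x, x ∈ CsF f m → π x = c := by
        intro x hx; simp only [hπ]; exact if_pos hx
      have pi_spec2 : ∀ x, x ∉ CsF f m → π x = x := by
        intro x hx; simp only [hπ]; exact if_neg hx
      have pi_eq : ∀ x y, π x = π y → x = y ∨ (x ∈ CsF f m ∧ y ∈ CsF f m) := by
        intro x y h
        by_cases hx : x ∈ CsF f m <;> by_cases hy : y ∈ CsF f m
        · right; exact ⟨hx, hy⟩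
        · rw [pi_spec1 _ hx, pi_spec2 _ hy] at h
          exact absurd (h ▸ hcCs) hy
        · rw [pi_spec2 _ hx, pi_spec1 _ hy] at h
          exact absurd (by rw [h]; exact hcCs) hx
        · left; rwa [pi_spec2 _ hx, pi_spec2 _ hy] at h
      set rest := U \ CEF f m with hrest
      have rest_off : ∀ e ∈ rest, e.1 ∉ CsF f m ∨ e.2 ∉ CsF f m := by
        intro e he
        rw [hrest, Finset.mem_sdiff] at he
        by_contra hboth
        push_neg at hboth
        exact he.2 (hchord e he.1 hboth.1 hboth.2)
      set U' := rest.image (fun e : α × α => (π e.1, π e.2)) with hU'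
      set V' := insert c (V \ CsF f m) with hV'
      have hinj2 : Set.InjOn (fun e : α × α => (π e.1, π e.2)) ↑rest := by
        intro e1 h1 e2 h2 heq
        simp only [Finset.mem_coe] at h1 h2
        have h1U : e1 ∈ U := (Finset.mem_sdiff.1 h1).1
        have h2U : e2 ∈ U := (Finset.mem_sdiff.1 h2).1
        have q1 : π e1.1 = π e2.1 := congrArg Prod.fst heq
        have q2 : π e1.2 = π e2.2 := congrArg Prod.snd heq
        have hoff1 := rest_off e1 h1
        have hoff2 := rest_off e2 h2
        rcases pi_eq _ _ q1 with hx | ⟨hxc1, hxc2⟩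
        · rcases pi_eq _ _ q2 with hy | ⟨hyc1, hyc2⟩
          · exact Prod.ext hx hy
          · have hx1 : e1.1 ∉ CsF f m := by
              rcases hoff1 with h | h
              · exact h
              · exact absurd hyc1 h
            have he1 : (e1.1, e1.2) ∈ U := by simpa using h1U
            have he2 : (e1.1, e2.2) ∈ U := by rw [hx]; simpa using h2U
            exact Prod.ext hx (hC2 e1.1 e1.2 e2.2 hx1 he1 he2 hyc1 hyc2)
        · have hy1 : e1.2 ∉ CsF f m := by
            rcases hoff1 with h | h
            · exact absurd hxc1 h
            · exact h
          have hy2 : e2.2 ∉ CsF f m := by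
            rcases hoff2 with h | h
            · exact absurd hxc2 h
            · exact h
          have hy : e1.2 = e2.2 := by
            rwa [pi_spec2 _ hy1, pi_spec2 _ hy2] at q2
          have he1 : (e1.1, e1.2) ∈ U := by simpa using h1U
          have he2 : (e2.1, e1.2) ∈ U := by rw [hy]; simpa using h2U
          exact Prod.ext (hC3 e1.2 e1.1 e2.1 hy1 he1 he2 hxc1 hxc2) hy
      have hU'card : U'.card = U.card - m := by
        rw [hU', Finset.card_image_of_injOn hinj2, hrest,
          Finset.card_sdiff_of_subset hCEsub, hCEcard]
      have hCEle : m ≤ U.card := hCEcard ▸ Finset.card_le_card hCEsub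
      have hUcard' : U.card = U'.card + m := by omega
      have hmV : m ≤ V.card := hCscard ▸ Finset.card_le_card hCsV
      have pi_mem : ∀ x, x ∈ V → π x ∈ V' := by
        intro x hx
        by_cases hxc : x ∈ CsF f m
        · rw [pi_spec1 _ hxc, hV']; exact Finset.mem_insert_self _ _
        · rw [pi_spec2 _ hxc, hV']
          exact Finset.mem_insert_of_mem (Finset.mem_sdiff.2 ⟨hx, hxc⟩)
      have hU'sub : U' ⊆ V' ×ˢ V' := by
        intro e' he'
        obtain ⟨w, hwrest, hweq⟩ := Finset.mem_image.1 he'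
        have hwU : w ∈ U := (Finset.mem_sdiff.1 hwrest).1
        have hp := Finset.mem_product.1 (hUV hwU)
        rw [← hweq]
        exact Finset.mem_product.2 ⟨pi_mem _ hp.1, pi_mem _ hp.2⟩
      have hV'card : V'.card = V.card - m + 1 := by
        rw [hV', Finset.card_insert_of_notMem (by simp [hcCs]),
          Finset.card_sdiff_of_subset hCsV, hCscard]
      -- independence of the contracted graph
      have hindU' : CIndep U' := by
        intro e' he' htg
        obtain ⟨eh, hehrest, heheq⟩ := Finset.mem_image.1 he'
        have hehU : eh ∈ U := (Finset.mem_sdiff.1 hehrest).1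
        have hehCE : eh ∉ CEF f m := (Finset.mem_sdiff.1 hehrest).2
        have hWsteps := steps_in_erase hm1 hper hstep hehCE
        have csR : ∀ x y, x ∈ CsF f m → y ∈ CsF f m →
            Relation.ReflTransGen (Rel (U.erase eh)) x y :=
          fun x y hx hy => cs_reach hm1 hper hWsteps hx hy
        have lift : ∀ p q, Relation.TransGen (Rel (U'.erase e')) p q →
            ∀ p₀, π p₀ = p → ∃ q₀, π q₀ = q ∧
              Relation.TransGen (Rel (U.erase eh)) p₀ q₀ := by
          intro p q htg'
          have extract : ∀ {x y : α}, Rel (U'.erase e') x y → ∀ x₀, π x₀ = x →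
              ∃ y₀, π y₀ = y ∧ Relation.TransGen (Rel (U.erase eh)) x₀ y₀ := by
            intro x y h x₀ hx₀
            have hq := Finset.mem_erase.1 h
            obtain ⟨w, hwrest, hweq⟩ := Finset.mem_image.1 hq.2
            have hwne : w ≠ eh := by
              rintro rfl
              exact hq.1 (hweq ▸ heheq ▸ rfl)
            have hw1 : π w.1 = x := congrArg Prod.fst hweq
            have hw2 : π w.2 = y := congrArg Prod.snd hweq
            have conn : Relation.ReflTransGen (Rel (U.erase eh)) x₀ w.1 := by
              rcases pi_eq x₀ w.1 (by rw [hx₀, hw1]) with h' | ⟨h1, h2⟩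
              · exact h' ▸ Relation.ReflTransGen.refl
              · exact csR _ _ h1 h2
            have hstep' : Rel (U.erase eh) w.1 w.2 :=
              Finset.mem_erase.2 ⟨by simpa using hwne, (Finset.mem_sdiff.1 hwrest).1⟩
            exact ⟨w.2, hw2, Relation.TransGen.trans_right conn
              (Relation.TransGen.single hstep')⟩
          induction htg' using Relation.TransGen.head_induction_on with
          | single h => exact fun p₀ hp₀ => extract h p₀ hp₀
          | head h' htg'' IH =>
            intro p₀ hp₀
            obtain ⟨y₀, hy₀, htg₀⟩ := extract h' p₀ hp₀
            obtain ⟨q₀, hq₀, htg₁⟩ := IH y₀ hy₀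
            exact ⟨q₀, hq₀, htg₀.trans htg₁⟩
        obtain ⟨q₀, hq₀, htg₀⟩ := lift e'.1 e'.2 htg eh.1 (congrArg Prod.fst heheq)
        have hbridge : Relation.ReflTransGen (Rel (U.erase eh)) q₀ eh.2 := by
          rcases pi_eq q₀ eh.2 (by rw [hq₀, ← congrArg Prod.snd heheq]) with h' | ⟨h1, h2⟩
          · exact h' ▸ Relation.ReflTransGen.refl
          · exact csR _ _ h1 h2
        exact hind eh hehU (Relation.TransGen.trans_left htg₀ hbridge)
      have hbound := ih V' U' (by omega) hU'sub hindU'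
      -- final arithmetic
      have h2V : 2 ≤ V.card := le_trans hm hmV
      have hV'lt : V'.card < V.card := by omega
      have h5 := ar2 hV'lt h2V
      rw [hUcard']
      rw [hV'card] at hbound h5
      generalize hA : (V.card - m + 1) ^ 2 / 4 = A at hbound h5
      generalize hB : V.card ^ 2 / 4 = B at h5 ⊢
      omega
    · -- acyclic case
      push_neg at hcyc
      set L := U.filter (fun x => ¬ x.1 ≠ x.2) with hL
      have hsplit : E.card + L.card = U.card := Finset.card_filter_add_card_filter_not _
      have hEbound : E.card ≤ V.card ^ 2 / 4 := by
        refine acyc_bound (k + 1) V E hV ?_ hcyc (cindep_subset (Finset.filter_subset _ _) hind)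
        exact subset_trans (Finset.filter_subset _ _) hUV
      have hLbound : L.card ≤ V.card := by
        apply Finset.card_le_card_of_injOn (fun e => e.1)
        · intro x hx
          simp only [Finset.mem_coe, hL, Finset.mem_filter] at hx
          exact (Finset.mem_product.1 (hUV hx.1)).1
        · intro x hx y hy hxy
          simp only [Finset.mem_coe, hL, Finset.mem_filter] at hx hy
          have hx2 : x.1 = x.2 := not_not.1 hx.2
          have hy2 : y.1 = y.2 := not_not.1 hy.2
          have hxy' : x.1 = y.1 := hxy
          refine Prod.ext hxy' ?_
          rw [← hx2, ← hy2]
          exact hxy' 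
      omega

end Stmt14Aux

namespace Stmt14Aux

open Relation Finset

variable {n : ℕ}

/-! ### Brandt basics -/

lemma theta_add (a : Brandt n) : Brandt.theta n + a = Brandt.theta n := by cases a <;> rfl

lemma add_theta (a : Brandt n) : a + Brandt.theta n = Brandt.theta n := by cases a <;> rfl

lemma theta_add_theta : Brandt.theta n + Brandt.theta n = Brandt.theta n := rfl

lemma pair_add_pair (i j k l : Fin n) :
    Brandt.pair i j + Brandt.pair k l = if j = k then Brandt.pair i l else Brandt.theta n := by
  by_cases h : j = k <;>
    simp [Brandt.pair, Brandt.theta, HAdd.hAdd, Add.add, Brandt.add, h] <;> rfl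

lemma pair_ne_theta (i j : Fin n) : Brandt.pair i j ≠ Brandt.theta n := fun h =>
  Option.some_ne_none _ h

lemma pair_inj {i j k l : Fin n} (h : Brandt.pair i j = Brandt.pair k l) : i = k ∧ j = l := by
  have h2 : ((i, j) : Fin n × Fin n) = (k, l) := Option.some.inj h
  exact ⟨congrArg Prod.fst h2, congrArg Prod.snd h2⟩

lemma mb_add_apply (f g : MB n) (a : Brandt n) : (f + g) a = f a + g a := rfl

def zeroM (n : ℕ) : MB n := fun _ => Brandt.theta n

lemma zeroM_add (f : MB n) : zeroM n + f = zeroM n := funext fun _ => theta_add _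

lemma add_zeroM (f : MB n) : f + zeroM n = zeroM n := funext fun _ => add_theta _

/-! ### singleton maps -/

/-- `sP β v` is the singleton-support map sending the pair `β` to the pair `v`. -/
def sP (β v : Fin n × Fin n) : MB n := sMap β.1 β.2 (Brandt.pair v.1 v.2)

lemma sP_apply_self (β v : Fin n × Fin n) :
    sP β v (Brandt.pair β.1 β.2) = Brandt.pair v.1 v.2 := by
  simp [sP, sMap]

lemma sP_apply_ne (β v : Fin n × Fin n) {a : Brandt n} (h : a ≠ Brandt.pair β.1 β.2) :
    sP β v a = Brandt.theta n := by
  simp [sP, sMap, h]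

lemma sP_comp (β : Fin n × Fin n) (p r q : Fin n) :
    sP β (p, r) + sP β (r, q) = sP β (p, q) := by
  funext a
  by_cases ha : a = Brandt.pair β.1 β.2
  · rw [mb_add_apply, ha, sP_apply_self, sP_apply_self, sP_apply_self, pair_add_pair, if_pos rfl]
  · rw [mb_add_apply, sP_apply_ne _ _ ha, sP_apply_ne _ _ ha, sP_apply_ne _ _ ha, theta_add]

lemma sP_mismatch (β : Fin n × Fin n) (v w : Fin n × Fin n) (h : v.2 ≠ w.1) :
    sP β v + sP β w = zeroM n := by
  funext a
  by_cases ha : a = Brandt.pair β.1 β.2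
  · rw [mb_add_apply, ha, sP_apply_self, sP_apply_self, pair_add_pair, if_neg h]; rfl
  · rw [mb_add_apply, sP_apply_ne _ _ ha, theta_add]; rfl

lemma sP_comp' (β : Fin n × Fin n) (v w : Fin n × Fin n) (h : v.2 = w.1) :
    sP β v + sP β w = sP β (v.1, w.2) := by
  obtain ⟨v1, v2⟩ := v
  obtain ⟨w1, w2⟩ := w
  simp only at h
  subst h
  exact sP_comp β v1 v2 w2

lemma sP_diff (β γ : Fin n × Fin n) (v w : Fin n × Fin n) (h : β ≠ γ) :
    sP β v + sP γ w = zeroM n := by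
  funext a
  by_cases ha : a = Brandt.pair β.1 β.2
  · have ha2 : a ≠ Brandt.pair γ.1 γ.2 := by
      rw [ha]
      intro hc
      obtain ⟨h1, h2⟩ := pair_inj hc
      exact h (Prod.ext h1 h2)
    rw [mb_add_apply, sP_apply_ne _ _ ha2, add_theta]; rfl
  · rw [mb_add_apply, sP_apply_ne _ _ ha, theta_add]; rfl

lemma sP_inj {β v γ w : Fin n × Fin n} (h : sP β v = sP γ w) : β = γ ∧ v = w := by
  have h1 := congrFun h (Brandt.pair β.1 β.2)
  rw [sP_apply_self] at h1
  by_cases hβγ : (Brandt.pair β.1 β.2 : Brandt n) = Brandt.pair γ.1 γ.2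
  · obtain ⟨ha, hb⟩ := pair_inj hβγ
    have hβγ' : β = γ := Prod.ext ha hb
    rw [hβγ, sP_apply_self] at h1
    obtain ⟨hc, hd⟩ := pair_inj h1
    exact ⟨hβγ', Prod.ext hc hd⟩
  · rw [sP_apply_ne _ _ hβγ] at h1
    exact absurd h1 (pair_ne_theta _ _)

lemma supp_sP (β v : Fin n × Fin n) : supp (sP β v) = {Brandt.pair β.1 β.2} := by
  ext a
  simp only [supp, Set.mem_setOf_eq, Set.mem_singleton_iff]
  constructor
  · intro h
    by_contra hne
    exact h (sP_apply_ne _ _ hne)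
  · intro h
    rw [h, sP_apply_self]
    exact pair_ne_theta _ _

lemma ncard_supp_sP (β v : Fin n × Fin n) : (supp (sP β v)).ncard = 1 := by
  rw [supp_sP]
  exact Set.ncard_singleton _

/-! ### closure bridges -/

lemma tg_to_closure {β : Fin n × Fin n} (S : Set (MB n)) (R : Fin n → Fin n → Prop)
    (hS : ∀ x y, R x y → sP β (x, y) ∈ S) :
    ∀ p q, Relation.TransGen R p q → sP β (p, q) ∈ AddSubsemigroup.closure S := by
  intro p q h
  induction h with
  | @single q' h => exact AddSubsemigroup.subset_closure (hS _ _ h)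
  | @tail q' q'' h1 h2 ih =>
    have h3 := AddSubsemigroup.add_mem _ ih (AddSubsemigroup.subset_closure (hS _ _ h2))
    rwa [sP_comp] at h3

lemma closure_elim (W : Set (MB n)) (hW : ∀ g ∈ W, ∃ γ w, g = sP γ w) :
    ∀ f ∈ AddSubsemigroup.closure W, f = zeroM n ∨ ∃ γ w, f = sP γ w ∧
      Relation.TransGen (fun x y => sP γ (x, y) ∈ W) w.1 w.2 := by
  intro f hf
  refine AddSubsemigroup.closure_induction ?_ ?_ hf
  · intro g hg
    obtain ⟨γ, w, rfl⟩ := hW g hg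
    refine Or.inr ⟨γ, w, rfl, Relation.TransGen.single ?_⟩
    simpa using hg
  · rintro x y hx hy (rfl | ⟨γ₁, w₁, rfl, h₁⟩) (hy' | ⟨γ₂, w₂, rfl, h₂⟩)
    · left; rw [zeroM_add]
    · left; rw [zeroM_add]
    · left; rcases hy' with rfl; rw [add_zeroM]
    · by_cases hγ : γ₁ = γ₂
      · subst hγ
        by_cases hv : w₁.2 = w₂.1
        · refine Or.inr ⟨γ₁, (w₁.1, w₂.2), sP_comp' _ _ _ hv, ?_⟩
          exact h₁.trans (by rwa [← hv] at h₂)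
        · left; exact sP_mismatch _ _ _ hv
      · left; exact sP_diff _ _ _ _ hγ

/-! ### constants and Aplus -/

lemma aplus_const (f : MB n) (hf : f ∈ Aplus n) :
    f (Brandt.theta n) = Brandt.theta n ∨ ∀ x, f x = f (Brandt.theta n) := by
  refine AddSubsemigroup.closure_induction ?_ ?_ hf
  · rintro g ⟨e, cc, hend, rfl⟩
    have hidem : e (Brandt.theta n) = e (Brandt.theta n) + e (Brandt.theta n) := by
      conv_lhs => rw [← theta_add_theta (n := n)]
      exact hend _ _
    rcases he : e (Brandt.theta n) with _ | ⟨t, u⟩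
    · left
      show e (Brandt.theta n) + xi cc (Brandt.theta n) = Brandt.theta n
      rw [he]
      exact theta_add _
    · rw [he] at hidem
      have htu : u = t := by
        by_contra hne
        rw [show (some (t, u) : Brandt n) = Brandt.pair t u from rfl,
          pair_add_pair, if_neg hne] at hidem
        exact pair_ne_theta t u hidem
      subst htu
      have hall : ∀ a, e a = some (u, u) := by
        intro a
        have h1 : e (Brandt.theta n) = e a + e (Brandt.theta n) := by
          conv_lhs => rw [show (Brandt.theta n : Brandt n) = a + Brandt.theta n from
            (add_theta a).symm]
          exact hend _ _
        rw [he] at h1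
        rcases hea : e a with _ | ⟨p, q⟩
        · rw [hea] at h1
          exact (Option.some_ne_none _ (h1.trans (theta_add (some (u, u))))).elim
        · rw [hea, show (some (p, q) : Brandt n) = Brandt.pair p q from rfl,
            show (some (u, u) : Brandt n) = Brandt.pair u u from rfl, pair_add_pair] at h1
          by_cases hq : q = u
          · rw [if_pos hq] at h1
            have h5 := pair_inj h1
            rw [hq, ← h5.1]
          · rw [if_neg hq] at h1
            exact absurd h1 (pair_ne_theta u u)
      right
      intro x
      show e x + xi cc x = e (Brandt.theta n) + xi cc (Brandt.theta n)
      rw [hall x, he]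
      rfl
  · rintro x y hx hy ihx ihy
    rcases ihx with h1 | h1
    · left; rw [mb_add_apply, h1, theta_add]
    · rcases ihy with h2 | h2
      · left; rw [mb_add_apply, h2, add_theta]
      · right
        intro a
        rw [mb_add_apply, mb_add_apply, h1 a, h2 a]

end Stmt14Aux

namespace Stmt14Aux
open Relation Finset

variable {n : ℕ}

/-! ### decomposition of 1-support elements of Aplus -/

lemma fintype_card_brandt : Fintype.card (Brandt n) = n * n + 1 := by
  have h : Fintype.card (Brandt n) = Fintype.card (Option (Fin n × Fin n)) := rfl
  rw [h, Fintype.card_option, Fintype.card_prod, Fintype.card_fin]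

lemma decomp (hn : 2 ≤ n) (f : MB n) (hf : f ∈ Aplus n) (hs : (supp f).ncard = 1) :
    ∃ β v : Fin n × Fin n, f = sP β v := by
  rcases aplus_const f hf with hθ | hconst
  · obtain ⟨x₀, hx₀⟩ := Set.ncard_eq_one.1 hs
    have hx₀s : x₀ ∈ supp f := by rw [hx₀]; exact Set.mem_singleton _
    rcases hx : x₀ with _ | β
    · rw [hx] at hx₀s
      exact absurd hθ hx₀s
    · have hfv : f (some β) ≠ Brandt.theta n := by rw [← hx]; exact hx₀s
      rcases hv : f (some β) with _ | v
      · exact absurd hv hfv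
      · refine ⟨β, v, funext fun a => ?_⟩
        by_cases ha : a = Brandt.pair β.1 β.2
        · rw [ha, sP_apply_self]
          have h1 : (Brandt.pair β.1 β.2 : Brandt n) = some β := by
            show (some (β.1, β.2) : Brandt n) = some β
            rw [Prod.mk.eta]
          rw [h1, hv]
          show (some v : Brandt n) = some (v.1, v.2)
          rw [Prod.mk.eta]
        · have ha2 : a ∉ supp f := by
            rw [hx₀]
            intro hc
            rw [Set.mem_singleton_iff] at hc
            apply ha
            rw [hc, hx]
            show (some β : Brandt n) = some (β.1, β.2)
            rw [Prod.mk.eta]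
          rw [sP_apply_ne _ _ ha]
          by_contra hne
          exact ha2 hne
  · exfalso
    rcases hc : f (Brandt.theta n) with _ | v
    · have hsupp : supp f = ∅ := by
        ext a
        simp only [supp, Set.mem_setOf_eq, Set.mem_empty_iff_false, iff_false, not_not]
        rw [hconst a, hc]; rfl
      rw [hsupp] at hs
      simp at hs
    · have hsupp : supp f = Set.univ := by
        ext a
        simp only [supp, Set.mem_setOf_eq, Set.mem_univ, iff_true]
        rw [hconst a, hc]
        exact fun h => Option.some_ne_none _ h
      rw [hsupp, Set.ncard_univ, Nat.card_eq_fintype_card, fintype_card_brandt] at hs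
      have h4 : 4 ≤ n * n := Nat.mul_le_mul hn hn
      omega

/-! ### membership of singleton maps in Aplus -/

def autM (σ : Equiv.Perm (Fin n)) : MB n := fun a =>
  Option.map (fun x : Fin n × Fin n => (σ x.1, σ x.2)) a

lemma autM_pair (σ : Equiv.Perm (Fin n)) (i j : Fin n) :
    autM σ (Brandt.pair i j) = Brandt.pair (σ i) (σ j) := rfl

lemma autM_endo (σ : Equiv.Perm (Fin n)) : IsEndo (autM σ) := by
  intro a b
  cases a with
  | none => cases b <;> rfl
  | some x =>
    cases b with
    | none => rfl
    | some y =>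
      obtain ⟨i, j⟩ := x
      obtain ⟨k, l⟩ := y
      show autM σ (Brandt.pair i j + Brandt.pair k l) =
        autM σ (Brandt.pair i j) + autM σ (Brandt.pair k l)
      rw [pair_add_pair, autM_pair, autM_pair, pair_add_pair]
      by_cases h : j = k
      · rw [if_pos h, if_pos (congrArg σ h), autM_pair]
      · rw [if_neg h, if_neg (fun hc => h (σ.injective hc))]
        rfl

lemma sP_mem_aplus (β v : Fin n × Fin n) : sP β v ∈ Aplus n := by
  obtain ⟨k, l⟩ := β
  obtain ⟨p, q⟩ := v
  set σ := Equiv.swap k p with hσ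
  have h1 : IsAffine (autM σ + xi (Brandt.pair (σ l) k)) := ⟨autM σ, _, autM_endo σ, rfl⟩
  have h2 : IsAffine (autM (Equiv.refl (Fin n)) + xi (Brandt.pair l q)) :=
    ⟨autM (Equiv.refl (Fin n)), _, autM_endo _, rfl⟩
  have key : (autM σ + xi (Brandt.pair (σ l) k)) +
      (autM (Equiv.refl (Fin n)) + xi (Brandt.pair l q)) = sP (k, l) (p, q) := by
    funext a
    rcases a with _ | ⟨i, j⟩
    · show (Brandt.theta n + Brandt.pair (σ l) k) + (Brandt.theta n + Brandt.pair l q)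
        = sP (k, l) (p, q) (Brandt.theta n)
      simp only [theta_add]
      rw [sP_apply_ne _ _ (Ne.symm (pair_ne_theta k l))]
    · show (Brandt.pair (σ i) (σ j) + Brandt.pair (σ l) k) +
        (Brandt.pair i j + Brandt.pair l q) = sP (k, l) (p, q) (Brandt.pair i j)
      rw [pair_add_pair, pair_add_pair]
      by_cases hj : j = l
      · rw [if_pos (congrArg σ hj), if_pos hj, pair_add_pair]
        by_cases hi : i = k
        · rw [if_pos hi.symm]
          have hs : (Brandt.pair i j : Brandt n) = Brandt.pair k l := by
            rw [hi, hj]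
          rw [hs, sP_apply_self]
          show Brandt.pair (σ i) q = Brandt.pair p q
          rw [hi, hσ]
          rw [Equiv.swap_apply_left]
        · rw [if_neg (fun hc => hi hc.symm),
            sP_apply_ne _ _ (show (Brandt.pair i j : Brandt n) ≠ Brandt.pair k l from
              fun hc => hi (pair_inj hc).1)]
      · rw [if_neg (fun hc => hj (σ.injective hc)), if_neg hj, theta_add,
          sP_apply_ne _ _ (show (Brandt.pair i j : Brandt n) ≠ Brandt.pair k l from
            fun hc => hj (pair_inj hc).2)]
  have hmem := AddSubsemigroup.add_mem (Aplus n)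
    (AddSubsemigroup.subset_closure h1) (AddSubsemigroup.subset_closure h2)
  rwa [key] at hmem

/-! ### upper bound -/

lemma vals_cindep (Uset : Set (MB n)) (hind : IndepSet Uset) (β : Fin n × Fin n)
    (W : Finset (Fin n × Fin n)) (hWdef : ∀ v, v ∈ W ↔ sP β v ∈ Uset) : CIndep W := by
  intro e he htg
  apply hind (sP β e) ((hWdef e).1 he)
  have hS : ∀ x y, Rel (W.erase e) x y → sP β (x, y) ∈ Uset \ {sP β e} := by
    intro x y hxy
    obtain ⟨hne, hmem⟩ := Finset.mem_erase.1 hxy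
    refine ⟨(hWdef _).1 hmem, ?_⟩
    simp only [Set.mem_singleton_iff]
    intro hEq
    exact hne ((sP_inj hEq).2)
  have h2 := tg_to_closure (Uset \ {sP β e}) (Rel (W.erase e)) hS e.1 e.2 htg
  simpa using h2

lemma upper (hn : 2 ≤ n) (Uset : Set (MB n)) (hsub : Uset ⊆ supportPart (AplusSet n) 1)
    (hind : IndepSet Uset) : Uset.ncard ≤ n ^ 2 * (n ^ 2 / 4 + n) := by
  classical
  have hdec : ∀ f ∈ Uset, ∃ β v, f = sP β v := by
    intro f hf
    obtain ⟨hA, hc⟩ := hsub hf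
    exact decomp hn f hA hc
  set W : (Fin n × Fin n) → Finset (Fin n × Fin n) :=
    fun β => Finset.univ.filter (fun v => sP β v ∈ Uset) with hW
  have hWb : ∀ β, (W β).card ≤ n ^ 2 / 4 + n := by
    intro β
    have hci : CIndep (W β) := vals_cindep Uset hind β _ (fun v => by simp [hW])
    have hb := core_bound n (Finset.univ : Finset (Fin n)) (W β) (by simp)
      (by intro e he; simp [Finset.mem_product]) hci
    simpa using hb
  have hfin : Uset.Finite := Set.toFinite _
  have hsubU : hfin.toFinset ⊆ Finset.univ.biUnion (fun β => (W β).image (sP β)) := by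
    intro g hg
    rw [Set.Finite.mem_toFinset] at hg
    obtain ⟨β, v, rfl⟩ := hdec g hg
    refine Finset.mem_biUnion.2 ⟨β, Finset.mem_univ _, Finset.mem_image.2 ⟨v, ?_, rfl⟩⟩
    simp [hW, hg]
  calc Uset.ncard = hfin.toFinset.card := Set.ncard_eq_toFinset_card _ hfin
    _ ≤ (Finset.univ.biUnion (fun β => (W β).image (sP β))).card := Finset.card_le_card hsubU
    _ ≤ ∑ β ∈ Finset.univ, ((W β).image (sP β)).card := Finset.card_biUnion_le
    _ ≤ ∑ _β ∈ (Finset.univ : Finset (Fin n × Fin n)), (n ^ 2 / 4 + n) :=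
        Finset.sum_le_sum (fun β _ => le_trans Finset.card_image_le (hWb β))
    _ = n ^ 2 * (n ^ 2 / 4 + n) := by
        rw [Finset.sum_const, Finset.card_univ, Fintype.card_prod, Fintype.card_fin,
          smul_eq_mul, pow_two]

/-! ### the witness -/

lemma fin_filter_lt_card (h : ℕ) (hh : h ≤ n) :
    ((Finset.univ : Finset (Fin n)).filter (fun i => i.val < h)).card = h := by
  refine Finset.card_eq_of_bijective (fun i hi => ⟨i, lt_of_lt_of_le hi hh⟩) ?_ ?_ ?_
  · intro a ha
    rw [Finset.mem_filter] at ha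
    exact ⟨a.val, ha.2, Fin.ext rfl⟩
  · intro i hi
    rw [Finset.mem_filter]
    exact ⟨Finset.mem_univ _, hi⟩
  · intro i j hi hj hij
    exact congrArg Fin.val hij

lemma fin_filter_ge_card (h : ℕ) (hh : h ≤ n) :
    ((Finset.univ : Finset (Fin n)).filter (fun i => h ≤ i.val)).card = n - h := by
  have hsplit := Finset.card_filter_add_card_filter_not
    (s := (Finset.univ : Finset (Fin n))) (p := fun i => i.val < h)
  have heq : (Finset.univ.filter (fun i : Fin n => ¬ i.val < h)) =
      Finset.univ.filter (fun i : Fin n => h ≤ i.val) := by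
    apply Finset.filter_congr
    intro i _
    simp [Nat.not_lt]
  rw [heq, fin_filter_lt_card h hh, Finset.card_univ, Fintype.card_fin] at hsplit
  omega

lemma half_mul (n : ℕ) : (n / 2) * (n - n / 2) = n ^ 2 / 4 := by
  obtain ⟨k, hk | hk⟩ := Nat.even_or_odd' n
  · subst hk
    have e1 : 2 * k / 2 = k := by omega
    have e2 : 2 * k - k = k := by omega
    rw [e1, e2]
    have e3 : (2 * k) ^ 2 = k * k * 4 := by ring
    rw [e3, Nat.mul_div_cancel _ (by norm_num : (0:ℕ) < 4)]
  · subst hk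
    have e1 : (2 * k + 1) / 2 = k := by omega
    have e2 : 2 * k + 1 - k = k + 1 := by omega
    rw [e1, e2]
    have e3 : (2 * k + 1) ^ 2 = (k * (k + 1)) * 4 + 1 := by ring
    rw [e3]
    generalize k * (k + 1) = A
    omega

def V0 (n : ℕ) : Finset (Fin n × Fin n) :=
  Finset.univ.filter (fun v => v.1 = v.2 ∨ (v.1.val < n / 2 ∧ n / 2 ≤ v.2.val))

lemma V0_card : (V0 n).card = n ^ 2 / 4 + n := by
  classical
  have hdisj : Disjoint
      (Finset.univ.filter (fun v : Fin n × Fin n => v.1 = v.2))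
      (Finset.univ.filter (fun v : Fin n × Fin n => v.1.val < n / 2 ∧ n / 2 ≤ v.2.val)) := by
    rw [Finset.disjoint_left]
    intro v h1 h2
    rw [Finset.mem_filter] at h1 h2
    have h3 := h2.2
    have h4 : v.1.val = v.2.val := congrArg Fin.val h1.2
    omega
  have hdiag : (Finset.univ.filter (fun v : Fin n × Fin n => v.1 = v.2)).card = n := by
    have himg : (Finset.univ.filter (fun v : Fin n × Fin n => v.1 = v.2)) =
        Finset.univ.image (fun i : Fin n => (i, i)) := by
      ext v
      simp only [Finset.mem_filter, Finset.mem_univ, true_and, Finset.mem_image]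
      constructor
      · intro h
        exact ⟨v.1, Prod.ext rfl h⟩
      · rintro ⟨a, ha⟩
        rw [← ha]
    rw [himg, Finset.card_image_of_injective _ (fun a b hab => congrArg Prod.fst hab),
      Finset.card_univ, Fintype.card_fin]
  have hbip : (Finset.univ.filter (fun v : Fin n × Fin n =>
      v.1.val < n / 2 ∧ n / 2 ≤ v.2.val)).card = n ^ 2 / 4 := by
    have hprod : (Finset.univ.filter (fun v : Fin n × Fin n =>
        v.1.val < n / 2 ∧ n / 2 ≤ v.2.val)) =
        (Finset.univ.filter (fun i : Fin n => i.val < n / 2)) ×ˢ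
        (Finset.univ.filter (fun j : Fin n => n / 2 ≤ j.val)) := by
      ext v
      simp only [Finset.mem_filter, Finset.mem_univ, true_and, Finset.mem_product]
    rw [hprod, Finset.card_product, fin_filter_lt_card _ (Nat.div_le_self n 2),
      fin_filter_ge_card _ (Nat.div_le_self n 2), half_mul]
  rw [V0, Finset.filter_or, Finset.card_union_of_disjoint hdisj, hdiag, hbip, Nat.add_comm]

lemma V0_cindep : CIndep (V0 n) := by
  intro e he htg
  have hmem : ∀ x y : Fin n, Rel ((V0 n).erase e) x y →
      ((x, y) ≠ e ∧ (x = y ∨ (x.val < n / 2 ∧ n / 2 ≤ y.val))) := by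
    intro x y hxy
    obtain ⟨h1, h2⟩ := Finset.mem_erase.1 hxy
    refine ⟨h1, ?_⟩
    have := (Finset.mem_filter.1 h2).2
    simpa using this
  obtain ⟨e1, e2⟩ := e
  have hecase : e1 = e2 ∨ (e1.val < n / 2 ∧ n / 2 ≤ e2.val) := by
    have := (Finset.mem_filter.1 he).2
    simpa using this
  rcases hecase with heq | ⟨hlt, hle⟩
  · subst heq
    rcases Nat.lt_or_ge e1.val (n / 2) with hA | hB
    · have hinv : ∀ y, Relation.TransGen (Rel ((V0 n).erase (e1, e1))) e1 y →
          n / 2 ≤ y.val := by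
        intro y hy
        induction hy with
        | @single y h =>
          obtain ⟨hne, hcase⟩ := hmem _ _ h
          rcases hcase with h' | h'
          · exact absurd (by rw [h']) hne
          · exact h'.2
        | @tail y z hy hz ihy =>
          obtain ⟨hne, hcase⟩ := hmem _ _ hz
          rcases hcase with h' | h'
          · rwa [← h']
          · exact h'.2
      exact absurd (hinv e1 htg) (by omega)
    · have hinv : ∀ y, Relation.TransGen (Rel ((V0 n).erase (e1, e1))) e1 y → False := by
        intro y hy
        induction hy with
        | @single y h =>
          obtain ⟨hne, hcase⟩ := hmem _ _ h
          rcases hcase with h' | h'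
          · exact hne (by rw [h'])
          · have := h'.1
            omega
        | @tail y z hy hz ihy => exact ihy
      exact hinv e1 htg
  · have hinv : ∀ y, Relation.TransGen (Rel ((V0 n).erase (e1, e2))) e1 y →
        (y = e1 ∨ (n / 2 ≤ y.val ∧ y ≠ e2)) := by
      intro y hy
      induction hy with
      | @single y h =>
        obtain ⟨hne, hcase⟩ := hmem _ _ h
        rcases hcase with h' | h'
        · left; exact h'.symm
        · right; exact ⟨h'.2, fun hYe => hne (by rw [hYe])⟩
      | @tail y z hy hz ihy =>
        obtain ⟨hne, hcase⟩ := hmem _ _ hz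
        rcases ihy with h1 | h1
        · rcases hcase with h' | h'
          · left; rw [← h', h1]
          · right
            refine ⟨h'.2, fun hZe => hne ?_⟩
            rw [hZe, h1]
        · rcases hcase with h' | h'
          · right
            exact ⟨by rw [← h']; exact h1.1, by rw [← h']; exact h1.2⟩
          · have hy1 := h'.1
            have hy2 := h1.1
            omega
    rcases hinv e2 htg with h1 | h1
    · have h2 := congrArg Fin.val h1
      omega
    · exact h1.2 rfl

def U0 (n : ℕ) : Finset (MB n) := (Finset.univ ×ˢ V0 n).image
  (fun x : (Fin n × Fin n) × (Fin n × Fin n) => sP x.1 x.2)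

lemma U0_mem (g : MB n) : g ∈ U0 n ↔ ∃ β v, v ∈ V0 n ∧ g = sP β v := by
  constructor
  · intro hg
    obtain ⟨x, hx, hxe⟩ := Finset.mem_image.1 hg
    obtain ⟨hx1, hx2⟩ := Finset.mem_product.1 hx
    exact ⟨x.1, x.2, hx2, hxe.symm⟩
  · rintro ⟨β, v, hv, rfl⟩
    exact Finset.mem_image.2 ⟨(β, v), Finset.mem_product.2 ⟨Finset.mem_univ _, hv⟩, rfl⟩

lemma U0_card : (U0 n).card = n ^ 2 * (n ^ 2 / 4 + n) := by
  rw [U0, Finset.card_image_of_injOn, Finset.card_product, Finset.card_univ]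
  · rw [V0_card, Fintype.card_prod, Fintype.card_fin, pow_two]
  · intro x _ y _ hxy
    obtain ⟨h1, h2⟩ := sP_inj hxy
    exact Prod.ext h1 h2

lemma U0_indep : IndepSet (↑(U0 n) : Set (MB n)) := by
  intro a ha hcl
  rw [Finset.mem_coe, U0_mem] at ha
  obtain ⟨β, v, hv, rfl⟩ := ha
  have hW : ∀ g ∈ (↑(U0 n) : Set (MB n)) \ {sP β v}, ∃ γ w, g = sP γ w := by
    rintro g ⟨hg, _⟩
    rw [Finset.mem_coe, U0_mem] at hg
    obtain ⟨γ, w, _, rfl⟩ := hg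
    exact ⟨γ, w, rfl⟩
  rcases closure_elim _ hW (sP β v) hcl with h0 | ⟨γ, w, heq, htg⟩
  · have h1 := congrFun h0 (Brandt.pair β.1 β.2)
    rw [sP_apply_self] at h1
    exact pair_ne_theta _ _ h1
  · obtain ⟨hβγ, hvw⟩ := sP_inj heq
    subst hβγ
    subst hvw
    refine V0_cindep v hv (Relation.TransGen.mono ?_ _ _ htg)
    intro x y hxy
    obtain ⟨hU, hne⟩ := hxy
    rw [Finset.mem_coe, U0_mem] at hU
    obtain ⟨γ', w', hw', heq'⟩ := hU
    obtain ⟨hg1, hg2⟩ := sP_inj heq'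
    refine Finset.mem_erase.2 ⟨fun hc => hne ?_, ?_⟩
    · rw [Set.mem_singleton_iff, hc]
    · rw [hg2]
      exact hw'

end Stmt14Aux


/-- For `n ≥ 2`, the maximum cardinality of an independent
subset of `A⁺(Bₙ)₁` (singleton support maps) is `n²·(⌊n²/4⌋ + n)`. -/
theorem stmt_14 (n : ℕ) (hn : 2 ≤ n) :
    IsGreatest {m : ℕ | ∃ U : Set (MB n), U ⊆ supportPart (AplusSet n) 1 ∧
      IndepSet U ∧ U.ncard = m}
      (n ^ 2 * (n ^ 2 / 4 + n)) := by
  classical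
  constructor
  · refine ⟨(↑(Stmt14Aux.U0 n) : Set (MB n)), ?_, Stmt14Aux.U0_indep, ?_⟩
    · intro g hg
      rw [Finset.mem_coe, Stmt14Aux.U0_mem] at hg
      obtain ⟨β, v, hv, rfl⟩ := hg
      exact ⟨Stmt14Aux.sP_mem_aplus β v, Stmt14Aux.ncard_supp_sP β v⟩
    · rw [Set.ncard_coe_finset, Stmt14Aux.U0_card]
  · rintro N ⟨Uset, h1, h2, h3⟩
    rw [← h3]
    exact Stmt14Aux.upper hn Uset h1 h2
end

section
/- The 14-element set P = {⟨(k,l), α⟩ : k, l ∈ [2], α ∈ Q} ∪ {ξ_(1,1), ξ_(2,2)}, where Q = {(1,1), (1,2), (2,2)} ⊆ B_2, is an independent subset of A^+(B_2). Consequently, the upper rank satisfies r4(A^+(B_2)) ≥ 14. -/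
/-! ### Auxiliary material for statement 15 -/

private def q00 : Brandt 2 := Brandt.pair 0 0
private def q01 : Brandt 2 := Brandt.pair 0 1
private def q10 : Brandt 2 := Brandt.pair 1 0
private def q11 : Brandt 2 := Brandt.pair 1 1
private def idm : MB 2 := fun a => a
private def swm : MB 2 := fun a => Option.map (fun x => (x.1 + 1, x.2 + 1)) a

private lemma endoId : IsEndo idm := by unfold IsEndo; decide
private lemma endoSw : IsEndo swm := by unfold IsEndo; decide
private lemma endo00 : IsEndo (xi q00) := by unfold IsEndo; decide
private lemma endo11 : IsEndo (xi q11) := by unfold IsEndo; decide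

private lemma affn (g : MB 2) (c : Brandt 2) (hg : IsEndo g) : IsAffine (g + xi c) :=
  ⟨g, c, hg, rfl⟩

private lemma aff_c10 : IsAffine (xi q10) := ⟨xi q11, q10, endo11, by decide⟩
private lemma aff_c00 : IsAffine (xi q00) := ⟨xi q00, q00, endo00, by decide⟩
private lemma aff_c11 : IsAffine (xi q11) := ⟨xi q11, q11, endo11, by decide⟩

private lemma closMem {f f1 f2 : MB 2} (h1 : IsAffine f1) (h2 : IsAffine f2)
    (h : f = f1 + f2) : f ∈ AplusSet 2 := by
  rw [h]
  exact AddSubsemigroup.add_mem _ (AddSubsemigroup.subset_closure h1)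
    (AddSubsemigroup.subset_closure h2)

private lemma oneMem {f : MB 2} (h : IsAffine f) : f ∈ AplusSet 2 :=
  AddSubsemigroup.subset_closure h

private lemma notMemClosure {S C : Set (MB 2)}
    (hc : ∀ f ∈ C, ∀ g ∈ C, f + g ∈ C) (hS : S ⊆ C) {a : MB 2} (ha : a ∉ C) :
    a ∉ AddSubsemigroup.closure S := fun h =>
  ha ((AddSubsemigroup.closure_le (S := ⟨C, fun {x y} hx hy => hc x hx y hy⟩)).2 hS h)

private lemma sMap_at (k l : Fin 2) (γ : Brandt 2) :
    sMap k l γ (Brandt.pair k l) = γ := if_pos rfl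

private lemma sMap_theta (k l : Fin 2) (γ : Brandt 2) :
    sMap k l γ (Brandt.theta 2) = Brandt.theta 2 :=
  if_neg (by simp [Brandt.theta, Brandt.pair])

private lemma pair_inj {k l k' l' : Fin 2}
    (h : (Brandt.pair k l : Brandt 2) = Brandt.pair k' l') : k = k' ∧ l = l' := by
  have h' : (k, l) = (k', l') := Option.some.inj h
  exact ⟨congrArg Prod.fst h', congrArg Prod.snd h'⟩

private lemma sMap_ne (k l k' l' : Fin 2) (γ : Brandt 2) (h : ¬(k = k' ∧ l = l')) :
    sMap k' l' γ (Brandt.pair k l) = Brandt.theta 2 :=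
  if_neg fun hh => h (pair_inj hh)

private lemma keyt (t : Brandt 2) (ht : t = q00 ∨ t = q11) :
    ∀ u v : Brandt 2,
      (u = Brandt.theta 2 ∨ u = q00 ∨ u = q01 ∨ u = q11) →
      (v = Brandt.theta 2 ∨ v = q00 ∨ v = q01 ∨ v = q11) →
      ((u + v = Brandt.theta 2 ∨ u + v = q00 ∨ u + v = q01 ∨ u + v = q11) ∧
        (u + v = t → u = t ∧ v = t)) := by
  rcases ht with rfl | rfl <;> decide

private lemma key01 :
    ∀ u v : Brandt 2,
      (u = Brandt.theta 2 ∨ u = q00 ∨ u = q11) →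
      (v = Brandt.theta 2 ∨ v = q00 ∨ v = q11) →
      (u + v = Brandt.theta 2 ∨ u + v = q00 ∨ u + v = q11) := by decide

private lemma keyc (t : Brandt 2) (ht : t = q00 ∨ t = q11) :
    ∀ u v : Brandt 2, (u = Brandt.theta 2 ∨ u = t) → (v = Brandt.theta 2 ∨ v = t) →
      (u + v = Brandt.theta 2 ∨ u + v = t) := by
  rcases ht with rfl | rfl <;> decide

/-- The invariant set used for singleton maps with idempotent value. -/
private def Cfull (k l : Fin 2) (t : Brandt 2) : Set (MB 2) :=
  {f | (f (Brandt.pair k l) = Brandt.theta 2 ∨ f (Brandt.pair k l) = q00 ∨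
        f (Brandt.pair k l) = q01 ∨ f (Brandt.pair k l) = q11) ∧
      (f (Brandt.pair k l) = t → f (Brandt.theta 2) = t)}

private lemma Cfull_closed (k l : Fin 2) (t : Brandt 2) (ht : t = q00 ∨ t = q11) :
    ∀ f ∈ Cfull k l t, ∀ g ∈ Cfull k l t, f + g ∈ Cfull k l t := by
  intro f hf g hg
  obtain ⟨hV, hImp⟩ := keyt t ht (f (Brandt.pair k l)) (g (Brandt.pair k l)) hf.1 hg.1
  refine ⟨hV, fun h => ?_⟩
  obtain ⟨h1, h2⟩ := hImp h
  show f (Brandt.theta 2) + g (Brandt.theta 2) = t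
  rw [hf.2 h1, hg.2 h2]
  rcases ht with rfl | rfl <;> decide
private def LP : List (MB 2) :=
  [sMap 0 0 q00, sMap 0 0 q01, sMap 0 0 q11,
   sMap 0 1 q00, sMap 0 1 q01, sMap 0 1 q11,
   sMap 1 0 q00, sMap 1 0 q01, sMap 1 0 q11,
   sMap 1 1 q00, sMap 1 1 q01, sMap 1 1 q11,
   xi q00, xi q11]

/-- The 14-element set
`P = {⟨(k,l), α⟩ : k, l ∈ [2], α ∈ Q} ∪ {ξ_(1,1), ξ_(2,2)}` with
`Q = {(1,1), (1,2), (2,2)}` (indices `1, 2` of `[2]` modeled by `0, 1` of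
`Fin 2`) is an independent subset of `A⁺(B₂)`; consequently
`r₄(A⁺(B₂)) ≥ 14`. -/
theorem stmt_15 :
    ∀ Q : Set (Fin 2 × Fin 2), Q = {(0, 0), (0, 1), (1, 1)} →
    ∀ P : Set (MB 2),
      P = {f | ∃ k l : Fin 2, ∃ α ∈ Q, f = sMap k l (Brandt.pair α.1 α.2)} ∪
        {xi (Brandt.pair 0 0), xi (Brandt.pair 1 1)} →
      (P ⊆ AplusSet 2 ∧ P.ncard = 14 ∧ IndepSet P) ∧
      ∃ m ∈ {m : ℕ | ∃ U : Set (MB 2), U ⊆ AplusSet 2 ∧ IndepSet U ∧ U.ncard = m},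
        14 ≤ m := by
  intro Q hQ P hP
  subst hQ
  -- the fourteen elements
  have hPF : P = (LP.toFinset : Finset (MB 2)) := by
    rw [hP]; ext f
    constructor
    · rintro (⟨k, l, α, hα, rfl⟩ | hf)
      · simp only [Set.mem_insert_iff, Set.mem_singleton_iff] at hα
        rcases hα with rfl | rfl | rfl <;> fin_cases k <;> fin_cases l <;>
          (apply Finset.mem_coe.mpr; apply List.mem_toFinset.mpr; decide)
      · simp only [Set.mem_insert_iff, Set.mem_singleton_iff] at hf
        rcases hf with rfl | rfl <;>
          (apply Finset.mem_coe.mpr; apply List.mem_toFinset.mpr; decide)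
    · intro hf
      have hf' : f ∈ LP := List.mem_toFinset.mp (Finset.mem_coe.mp hf)
      fin_cases hf'
      · exact Set.mem_union_left _ ⟨0, 0, (0, 0), by simp, rfl⟩
      · exact Set.mem_union_left _ ⟨0, 0, (0, 1), by simp, rfl⟩
      · exact Set.mem_union_left _ ⟨0, 0, (1, 1), by simp, rfl⟩
      · exact Set.mem_union_left _ ⟨0, 1, (0, 0), by simp, rfl⟩
      · exact Set.mem_union_left _ ⟨0, 1, (0, 1), by simp, rfl⟩
      · exact Set.mem_union_left _ ⟨0, 1, (1, 1), by simp, rfl⟩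
      · exact Set.mem_union_left _ ⟨1, 0, (0, 0), by simp, rfl⟩
      · exact Set.mem_union_left _ ⟨1, 0, (0, 1), by simp, rfl⟩
      · exact Set.mem_union_left _ ⟨1, 0, (1, 1), by simp, rfl⟩
      · exact Set.mem_union_left _ ⟨1, 1, (0, 0), by simp, rfl⟩
      · exact Set.mem_union_left _ ⟨1, 1, (0, 1), by simp, rfl⟩
      · exact Set.mem_union_left _ ⟨1, 1, (1, 1), by simp, rfl⟩
      · exact Set.mem_union_right _ (Set.mem_insert _ _)
      · exact Set.mem_union_right _ (Set.mem_insert_of_mem _ rfl)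
  have hcard : P.ncard = 14 := by
    rw [hPF, Set.ncard_coe_finset]; decide
  have hsub : P ⊆ AplusSet 2 := by
    rw [hP]
    rintro f (⟨k, l, α, hα, rfl⟩ | hf)
    · simp only [Set.mem_insert_iff, Set.mem_singleton_iff] at hα
      fin_cases k <;> fin_cases l <;> rcases hα with rfl | rfl | rfl
      · exact closMem (affn idm q01 endoId) (affn swm q10 endoSw) (by decide)
      · exact closMem (affn idm q01 endoId) (affn swm q11 endoSw) (by decide)
      · exact closMem (affn swm q11 endoSw) (affn swm q11 endoSw) (by decide)
      · exact closMem (affn idm q11 endoId) (affn swm q00 endoSw) (by decide)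
      · exact closMem (affn idm q11 endoId) (affn swm q01 endoSw) (by decide)
      · exact closMem aff_c10 (affn idm q11 endoId) (by decide)
      · exact closMem (affn swm q11 endoSw) (affn idm q00 endoId) (by decide)
      · exact closMem (affn swm q11 endoSw) (affn idm q01 endoId) (by decide)
      · exact closMem aff_c10 (affn swm q11 endoSw) (by decide)
      · exact closMem aff_c00 (affn swm q00 endoSw) (by decide)
      · exact closMem aff_c00 (affn swm q01 endoSw) (by decide)
      · exact closMem aff_c10 (affn swm q01 endoSw) (by decide)
    · simp only [Set.mem_insert_iff, Set.mem_singleton_iff] at hf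
      rcases hf with rfl | rfl
      · exact oneMem aff_c00
      · exact oneMem aff_c11
  have hindep : IndepSet P := by
    intro a ha
    rw [hP] at ha ⊢
    simp only [Set.mem_union, Set.mem_setOf_eq, Set.mem_insert_iff,
      Set.mem_singleton_iff] at ha
    rcases ha with ⟨k, l, α, hα, rfl⟩ | rfl | rfl
    · rcases hα with rfl | rfl | rfl
      · -- a = sMap k l (0,0)
        refine notMemClosure (C := Cfull k l q00) (Cfull_closed k l q00 (Or.inl rfl)) ?_ ?_
        · rintro f ⟨hfP, hfa⟩
          simp only [Set.mem_union, Set.mem_setOf_eq, Set.mem_insert_iff,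
            Set.mem_singleton_iff] at hfP
          rcases hfP with ⟨k', l', β, hβ, rfl⟩ | rfl | rfl
          · by_cases hkl : k = k' ∧ l = l'
            · obtain ⟨rfl, rfl⟩ := hkl
              rcases hβ with rfl | rfl | rfl
              · exact absurd rfl hfa
              · exact ⟨Or.inr (Or.inr (Or.inl (sMap_at k l _))),
                  fun h => absurd ((sMap_at k l _) ▸ h) (by decide)⟩
              · exact ⟨Or.inr (Or.inr (Or.inr (sMap_at k l _))),
                  fun h => absurd ((sMap_at k l _) ▸ h) (by decide)⟩
            · have hv := sMap_ne k l k' l' (Brandt.pair β.1 β.2) hkl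
              exact ⟨Or.inl hv, fun h => absurd (hv ▸ h) (by decide)⟩
          · exact ⟨Or.inr (Or.inl rfl), fun _ => rfl⟩
          · exact ⟨Or.inr (Or.inr (Or.inr rfl)), fun h => absurd (show q11 = q00 from h) (by decide)⟩
        · rintro ⟨h1, h2⟩
          have h3 := h2 (sMap_at k l _)
          rw [sMap_theta] at h3
          exact absurd h3 (by decide)
      · -- a = sMap k l (0,1)
        refine notMemClosure
          (C := {f : MB 2 | f (Brandt.pair k l) = Brandt.theta 2 ∨
            f (Brandt.pair k l) = q00 ∨ f (Brandt.pair k l) = q11})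
          (fun f hf g hg => key01 _ _ hf hg) ?_ ?_
        · rintro f ⟨hfP, hfa⟩
          simp only [Set.mem_union, Set.mem_setOf_eq, Set.mem_insert_iff,
            Set.mem_singleton_iff] at hfP
          rcases hfP with ⟨k', l', β, hβ, rfl⟩ | rfl | rfl
          · by_cases hkl : k = k' ∧ l = l'
            · obtain ⟨rfl, rfl⟩ := hkl
              rcases hβ with rfl | rfl | rfl
              · exact Or.inr (Or.inl (sMap_at k l _))
              · exact absurd rfl hfa
              · exact Or.inr (Or.inr (sMap_at k l _))
            · exact Or.inl (sMap_ne k l k' l' _ hkl)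
          · exact Or.inr (Or.inl rfl)
          · exact Or.inr (Or.inr rfl)
        · intro hC
          rcases hC with h | h | h <;>
            · rw [sMap_at] at h
              exact absurd h (by decide)
      · -- a = sMap k l (1,1)
        refine notMemClosure (C := Cfull k l q11) (Cfull_closed k l q11 (Or.inr rfl)) ?_ ?_
        · rintro f ⟨hfP, hfa⟩
          simp only [Set.mem_union, Set.mem_setOf_eq, Set.mem_insert_iff,
            Set.mem_singleton_iff] at hfP
          rcases hfP with ⟨k', l', β, hβ, rfl⟩ | rfl | rfl
          · by_cases hkl : k = k' ∧ l = l'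
            · obtain ⟨rfl, rfl⟩ := hkl
              rcases hβ with rfl | rfl | rfl
              · exact ⟨Or.inr (Or.inl (sMap_at k l _)),
                  fun h => absurd ((sMap_at k l _) ▸ h) (by decide)⟩
              · exact ⟨Or.inr (Or.inr (Or.inl (sMap_at k l _))),
                  fun h => absurd ((sMap_at k l _) ▸ h) (by decide)⟩
              · exact absurd rfl hfa
            · have hv := sMap_ne k l k' l' (Brandt.pair β.1 β.2) hkl
              exact ⟨Or.inl hv, fun h => absurd (hv ▸ h) (by decide)⟩
          · exact ⟨Or.inr (Or.inl rfl), fun h => absurd (show q00 = q11 from h) (by decide)⟩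
          · exact ⟨Or.inr (Or.inr (Or.inr rfl)), fun _ => rfl⟩
        · rintro ⟨h1, h2⟩
          have h3 := h2 (sMap_at k l _)
          rw [sMap_theta] at h3
          exact absurd h3 (by decide)
    · -- a = xi (0,0)
      refine notMemClosure
        (C := {f : MB 2 | f (Brandt.theta 2) = Brandt.theta 2 ∨ f (Brandt.theta 2) = q11})
        (fun f hf g hg => keyc q11 (Or.inr rfl) _ _ hf hg) ?_ ?_
      · rintro f ⟨hfP, hfa⟩
        simp only [Set.mem_union, Set.mem_setOf_eq, Set.mem_insert_iff,
          Set.mem_singleton_iff] at hfP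
        rcases hfP with ⟨k', l', β, hβ, rfl⟩ | rfl | rfl
        · exact Or.inl (sMap_theta k' l' _)
        · exact absurd rfl hfa
        · exact Or.inr rfl
      · intro hC
        rcases hC with h | h <;> exact absurd h (by decide)
    · -- a = xi (1,1)
      refine notMemClosure
        (C := {f : MB 2 | f (Brandt.theta 2) = Brandt.theta 2 ∨ f (Brandt.theta 2) = q00})
        (fun f hf g hg => keyc q00 (Or.inl rfl) _ _ hf hg) ?_ ?_
      · rintro f ⟨hfP, hfa⟩
        simp only [Set.mem_union, Set.mem_setOf_eq, Set.mem_insert_iff,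
          Set.mem_singleton_iff] at hfP
        rcases hfP with ⟨k', l', β, hβ, rfl⟩ | rfl | rfl
        · exact Or.inl (sMap_theta k' l' _)
        · exact Or.inr rfl
        · exact absurd rfl hfa
      · intro hC
        rcases hC with h | h <;> exact absurd h (by decide)
  exact ⟨⟨hsub, hcard, hindep⟩, 14, ⟨P, hsub, hindep, hcard⟩, le_rfl⟩
end

section
/- For every integer n ≥ 3, every element of A^+(B_n) is decomposable; that is, for every f ∈ A^+(B_n) there exist g, h ∈ A^+(B_n) with g ≠ f and h ≠ f such that f = g + h. -/
section Aux

lemma MB.add_apply {n : ℕ} (f g : MB n) (a : Brandt n) : (f + g) a = f a + g a := rfl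

lemma Brandt.add_eq {n : ℕ} (a b : Option (Fin n × Fin n)) :
    @HAdd.hAdd (Brandt n) (Brandt n) (Brandt n) _ a b = Brandt.add a b := rfl

lemma xi_mem_aplus {n : ℕ} (c : Brandt n) : xi c ∈ Aplus n := by
  apply AddSubsemigroup.subset_closure
  cases c with
  | none =>
      refine ⟨xi none, none, ?_, ?_⟩
      · intro a b
        simp [xi, Brandt.add_eq, Brandt.add]; rfl
      · funext a
        rw [MB.add_apply]
        simp [xi, Brandt.add_eq, Brandt.add]; rfl
  | some p =>
      refine ⟨xi (some (p.1, p.1)), some p, ?_, ?_⟩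
      · intro a b
        simp [xi, Brandt.add_eq, Brandt.add]; rfl
      · funext a
        rw [MB.add_apply]
        simp [xi, Brandt.add_eq, Brandt.add]; rfl

lemma aplus_sec {n : ℕ} (hn : 0 < n) {f : MB n} (hf : f ∈ Aplus n) :
    ∃ q : Fin n, ∀ a (i j : Fin n), f a = some (i, j) → j = q := by
  induction hf using AddSubsemigroup.closure_induction with
  | mem x hx =>
      obtain ⟨g, c, _, rfl⟩ := hx
      cases c with
      | none =>
          refine ⟨⟨0, hn⟩, fun a i j h => ?_⟩
          rw [MB.add_apply] at h
          rcases hga : g a with _ | x <;> rw [hga] at h <;>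
            simp [xi, Brandt.add_eq, Brandt.add] at h
      | some c =>
          refine ⟨c.2, fun a i j h => ?_⟩
          rw [MB.add_apply] at h
          rcases hga : g a with _ | x <;> rw [hga] at h
          · simp [xi, Brandt.add_eq, Brandt.add] at h
          · obtain ⟨x1, x2⟩ := x
            obtain ⟨c1, c2⟩ := c
            by_cases hx2 : x2 = c1 <;>
              simp [xi, Brandt.add_eq, Brandt.add, hx2] at h
            injection h with h
            exact (Prod.ext_iff.mp h).2.symm
  | add x y hx hy ihx ihy =>
      obtain ⟨q, hq⟩ := ihy
      refine ⟨q, fun a i j h => ?_⟩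
      rw [MB.add_apply] at h
      rcases hxa : x a with _ | u
      · rw [hxa] at h
        exact absurd (show (none : Option (Fin n × Fin n)) = some (i, j) from h) (by simp)
      · rcases hya : y a with _ | v
        · rw [hxa, hya] at h
          simp [Brandt.add_eq, Brandt.add] at h
        · rw [hxa, hya] at h
          obtain ⟨u1, u2⟩ := u; obtain ⟨v1, v2⟩ := v
          by_cases huv : u2 = v1 <;>
            simp [Brandt.add_eq, Brandt.add, huv] at h
          obtain ⟨rfl, rfl⟩ := h
          exact hq a v1 j hya

end Aux

/-- For `n ≥ 3`, every element of `A⁺(Bₙ)` is decomposable: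
for every `f ∈ A⁺(Bₙ)` there are `g, h ∈ A⁺(Bₙ)`, both different from `f`,
with `f = g + h`. -/
theorem stmt_17 (n : ℕ) (hn : 3 ≤ n) :
    ∀ f ∈ AplusSet n, ∃ g ∈ AplusSet n, ∃ h ∈ AplusSet n,
      g ≠ f ∧ h ≠ f ∧ f = g + h := by
  intro f hf
  have hf' : f ∈ Aplus n := hf
  by_cases h0 : f = xi (Brandt.theta n)
  -- Case 1: f is the constant ϑ map.
  · have h1 : 1 < n := by omega
    have h0n : 0 < n := by omega
    refine ⟨xi (Brandt.pair ⟨0, h0n⟩ ⟨1, h1⟩), xi_mem_aplus _,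
      xi (Brandt.pair ⟨0, h0n⟩ ⟨1, h1⟩), xi_mem_aplus _, ?_, ?_, ?_⟩
    · intro hgf
      have := congrFun hgf (Brandt.theta n)
      rw [h0] at this
      exact Option.some_ne_none _ this
    · intro hgf
      have := congrFun hgf (Brandt.theta n)
      rw [h0] at this
      exact Option.some_ne_none _ this
    · funext a
      rw [h0, MB.add_apply]
      have : (⟨1, h1⟩ : Fin n) ≠ ⟨0, h0n⟩ := by simp [Fin.ext_iff]
      simp [xi, Brandt.pair, Brandt.theta, Brandt.add_eq, Brandt.add, this]; rfl
  -- Case 2: f is not the constant ϑ map.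
  · obtain ⟨q, hq⟩ := aplus_sec (by omega) hf'
    have hex : ∃ a, f a ≠ Brandt.theta n := by
      by_contra hc
      push_neg at hc
      exact h0 (funext fun a => hc a)
    obtain ⟨a0, ha0⟩ := hex
    rcases hfa0 : f a0 with _ | x
    · exact absurd hfa0 ha0
    obtain ⟨i0, j0⟩ := x
    have hj0 : j0 = q := hq a0 i0 j0 hfa0
    rw [hj0] at hfa0
    -- choose u v distinct and different from q
    have huv : ∃ u v : Fin n, u ≠ v ∧ u ≠ q ∧ v ≠ q := by
      have h0n : 0 < n := by omega
      have h1 : 1 < n := by omega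
      have h2 : 2 < n := by omega
      by_cases hq0 : q.val = 0
      · exact ⟨⟨1, h1⟩, ⟨2, h2⟩, by simp [Fin.ext_iff], by simp [Fin.ext_iff, hq0],
          by simp [Fin.ext_iff, hq0]⟩
      · by_cases hq1 : q.val = 1
        · exact ⟨⟨0, h0n⟩, ⟨2, h2⟩, by simp [Fin.ext_iff], by simp [Fin.ext_iff, hq1],
            by simp [Fin.ext_iff, hq1]⟩
        · exact ⟨⟨0, h0n⟩, ⟨1, h1⟩, by simp [Fin.ext_iff], by simp [Fin.ext_iff]; omega,
            by simp [Fin.ext_iff]; omega⟩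
    obtain ⟨u, v, huv, huq, hvq⟩ := huv
    -- choose q' ∈ {u, v} with q' ≠ q and xi (q', q) ≠ f
    have hq' : ∃ q' : Fin n, q' ≠ q ∧ xi (Brandt.pair q' q) ≠ f := by
      by_cases hcu : xi (Brandt.pair u q) = f
      · refine ⟨v, hvq, fun hcv => ?_⟩
        have := congrFun (hcu.trans hcv.symm) (Brandt.theta n)
        simp only [xi, Brandt.pair] at this
        injection this with this
        exact huv ((Prod.ext_iff.mp this).1)
      · exact ⟨u, huq, hcu⟩
    obtain ⟨q', hq'q, hq'f⟩ := hq'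
    refine ⟨f + xi (Brandt.pair q q'), ?_, xi (Brandt.pair q' q), xi_mem_aplus _,
      ?_, hq'f, ?_⟩
    · exact AddSubsemigroup.add_mem _ hf' (xi_mem_aplus _)
    · intro hgf
      have := congrFun hgf a0
      rw [MB.add_apply, hfa0] at this
      simp only [xi, Brandt.pair, Brandt.add_eq, Brandt.add, if_pos rfl] at this
      injection this with this
      exact hq'q ((Prod.ext_iff.mp this).2)
    · funext a
      rw [MB.add_apply, MB.add_apply]
      rcases hfa : f a with _ | x
      · simp [xi, Brandt.pair, Brandt.add_eq, Brandt.add]; rfl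
      · obtain ⟨i, j⟩ := x
        have hj : j = q := hq a i j hfa
        subst hj
        simp [xi, Brandt.pair, Brandt.add_eq, Brandt.add]; rfl
end
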